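/- Let X be a simplicial complex on a finite vertex set and let k(X) denote the maximum size of a set {x₁, …, x_k} of vertices of X for which there exist facets A₁, …, A_{k+1} of X with x_i ∉ A_i for each 1 ≤ i ≤ k and x_i ∈ A_j for all 1 ≤ i < j ≤ k+1. Then θ(X) ≤ k(X). -/

import Mathlib

namespace ThetaPaper

variable {α : Type*} [DecidableEq α]

def delF (X : Finset (Finset α)) (v : α) : Finset (Finset α) :=
  X.filter fun S => v ∉ S

def lkF (X : Finset (Finset α)) (v : α) : Finset (Finset α) :=
  X.filter fun T => v ∉ T ∧ insert v T ∈ X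

def vertF (X : Finset (Finset α)) : Finset α := X.biUnion id

def nonConeF (X : Finset (Finset α)) : Finset α :=
  (vertF X).filter fun v => delF X v ≠ lkF X v

lemma delF_card_lt {X : Finset (Finset α)} {v : α} (h : v ∈ nonConeF X) :
    (delF X v).card < X.card := by
  obtain ⟨A, hA, hvA⟩ := Finset.mem_biUnion.mp (Finset.mem_filter.mp h).1
  refine Finset.card_lt_card ⟨Finset.filter_subset _ _, fun hsub => ?_⟩
  have h2 := hsub hA
  rw [delF, Finset.mem_filter] at h2
  exact h2.2 hvA

lemma lkF_card_lt {X : Finset (Finset α)} {v : α} (h : v ∈ nonConeF X) :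
    (lkF X v).card < X.card := by
  obtain ⟨A, hA, hvA⟩ := Finset.mem_biUnion.mp (Finset.mem_filter.mp h).1
  refine Finset.card_lt_card ⟨Finset.filter_subset _ _, fun hsub => ?_⟩
  have h2 := hsub hA
  rw [lkF, Finset.mem_filter] at h2
  exact h2.2.1 hvA

def theta (X : Finset (Finset α)) : ℕ :=
  if h : (nonConeF X).Nonempty then
    (nonConeF X).attach.inf' (Finset.attach_nonempty_iff.mpr h) fun v =>
      max (theta (delF X v.1)) (theta (lkF X v.1) + 1)
  else 0
termination_by X.card
decreasing_by
  · exact delF_card_lt v.2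
  · exact lkF_card_lt v.2

def IsComplex (X : Finset (Finset α)) : Prop :=
  ∀ A ∈ X, ∀ B, B ⊆ A → B ∈ X

/-- `dim(X)`, as an integer: the maximum of `|A| - 1` over faces `A ∈ X`. -/
noncomputable def dimZ (X : Finset (Finset α)) : ℤ :=
  sSup {d : ℤ | ∃ A ∈ X, d = (A.card : ℤ) - 1}

/-- A circuit (minimal non-face) of `X`. -/
def IsCircuit (X : Finset (Finset α)) (S : Finset α) : Prop :=
  S ∉ X ∧ ∀ T ⊂ S, T ∈ X

/-- A circuit cover of `X`. -/
def IsCircuitCover (X : Finset (Finset α)) (C : Finset α) : Prop :=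
  ∀ S : Finset α, IsCircuit X S → (S.card : ℤ) - 1 ≤ ((S ∩ C).card : ℤ)

/-- The circuit cover number `ccn(X)` of a complex with vertex set `V`. -/
noncomputable def ccnZ (V : Finset α) (X : Finset (Finset α)) : ℤ :=
  sInf {k : ℤ | ∃ C ⊆ V, IsCircuitCover X C ∧
    k = dimZ (X.filter fun A => A ⊆ C) + 1}

/-- The simplicial join. -/
def joinF (X₁ X₂ : Finset (Finset α)) : Finset (Finset α) :=
  X₁.biUnion fun A => X₂.image fun B => A ∪ B

/-- A facet (maximal face) of `X`. -/
def IsFacet (X : Finset (Finset α)) (B : Finset α) : Prop :=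
  B ∈ X ∧ ∀ C ∈ X, B ⊆ C → C = B

/-- An elementary `k`-collapse: remove the interval `[A, B]` where `A` is a face of size
at most `k` contained in the unique facet `B`. -/
def ElemCollapse (k : ℕ) (X Y : Finset (Finset α)) : Prop :=
  ∃ A B : Finset α, A ∈ X ∧ A.card ≤ k ∧ IsFacet X B ∧ A ⊆ B ∧
    (∀ C, IsFacet X C → A ⊆ C → C = B) ∧
    Y = X.filter fun C => ¬ (A ⊆ C ∧ C ⊆ B)

/-- `X` is `k`-collapsible: it reduces to the void complex by elementary `k`-collapses. -/
def Collapsible (k : ℕ) (X : Finset (Finset α)) : Prop :=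
  Relation.ReflTransGen (ElemCollapse k) X ∅

/-- The collapsibility number `C(X)`. -/
noncomputable def collapseNum (X : Finset (Finset α)) : ℕ :=
  sInf {k : ℕ | Collapsible k X}

/-- `k(X)`: the maximum size of a set `{x₁, …, x_k}` of vertices of `X` admitting facets
`A₁, …, A_{k+1}` with `x_i ∉ A_i` and `x_i ∈ A_j` for `i < j`. -/
noncomputable def kNum (X : Finset (Finset α)) : ℕ :=
  sSup {k : ℕ | ∃ (x : Fin k → α) (A : Fin (k + 1) → Finset α),
    Function.Injective x ∧ (∀ i, {x i} ∈ X) ∧ (∀ j, IsFacet X (A j)) ∧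
    (∀ i : Fin k, x i ∉ A i.castSucc) ∧
    (∀ (i : Fin k) (j : Fin (k + 1)), (i : ℕ) < (j : ℕ) → x i ∈ A j)}

/-- Vertex decomposable simplicial complexes. -/
inductive VertexDecomposable : Finset (Finset α) → Prop
  | simplex (S : Finset α) : VertexDecomposable S.powerset
  | shed (X : Finset (Finset α)) (v : α) (hv : {v} ∈ X)
      (hdel : VertexDecomposable (delF X v)) (hlk : VertexDecomposable (lkF X v))
      (hfacet : ∀ B, IsFacet (delF X v) B → IsFacet X B) : VertexDecomposable X

section Graphs

variable {V : Type*} [Fintype V] [DecidableEq V]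

open Classical in
/-- The independence complex of a graph, as a `Finset` of faces. -/
noncomputable def indComplex (G : SimpleGraph V) : Finset (Finset V) :=
  Finset.univ.powerset.filter fun A => ∀ x ∈ A, ∀ y ∈ A, ¬ G.Adj x y

/-- The theta-number of a graph: the theta-number of its independence complex. -/
noncomputable def thetaG (G : SimpleGraph V) : ℕ := theta (indComplex G)

/-- A graph is chordal if it has no induced cycle of length greater than `3`. -/
def Chordal {W : Type*} (G : SimpleGraph W) : Prop :=
  ∀ n : ℕ, 3 < n → IsEmpty (SimpleGraph.cycleGraph n ↪g G)

/-- Contraction of the edge `xy`: the merged vertex is `x`, and `y` becomes isolated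
(isolated vertices are irrelevant for the independence complex/theta-number). -/
def contractEdge (G : SimpleGraph V) (x y : V) : SimpleGraph V where
  Adj a b := a ≠ b ∧ a ≠ y ∧ b ≠ y ∧
    ((a = x ∧ (G.Adj x b ∨ G.Adj y b)) ∨
     (b = x ∧ (G.Adj a x ∨ G.Adj a y)) ∨
     (a ≠ x ∧ b ≠ x ∧ G.Adj a b))
  symm := by
    constructor
    rintro a b ⟨hab, hay, hby, h⟩
    refine ⟨Ne.symm hab, hby, hay, ?_⟩
    rcases h with ⟨ha, h⟩ | ⟨hb, h⟩ | ⟨ha, hb, h⟩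
    · exact Or.inr (Or.inl ⟨ha, h.imp (fun t => t.symm) (fun t => t.symm)⟩)
    · exact Or.inl ⟨hb, h.imp (fun t => t.symm) (fun t => t.symm)⟩
    · exact Or.inr (Or.inr ⟨hb, ha, h.symm⟩)
  loopless := by constructor; rintro a ⟨h, -⟩; exact h rfl

/-- One edge-contraction step: `H` is obtained from `G` by contracting an edge of `G`. -/
def ContractionStep (G H : SimpleGraph V) : Prop :=
  ∃ x y, G.Adj x y ∧ H = contractEdge G x y

/-- A matching of `G` (a set of pairwise disjoint edges). -/
def IsMatching (G : SimpleGraph V) (M : Finset (Sym2 V)) : Prop :=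
  (∀ e ∈ M, e ∈ G.edgeSet) ∧
    ∀ e ∈ M, ∀ f ∈ M, e ≠ f → ∀ x, x ∈ e → x ∉ f

/-- An induced matching of `G`: a matching such that no two vertices belonging to
different edges of it are adjacent. -/
def IsInducedMatching (G : SimpleGraph V) (M : Finset (Sym2 V)) : Prop :=
  IsMatching G M ∧ ∀ e ∈ M, ∀ f ∈ M, e ≠ f → ∀ x ∈ e, ∀ y ∈ f, ¬ G.Adj x y

/-- The induced matching number `im(G)`. -/
noncomputable def inducedMatchingNum (G : SimpleGraph V) : ℕ :=
  sSup {k : ℕ | ∃ M, IsInducedMatching G M ∧ M.card = k}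

/-- A maximal matching. -/
def IsMaximalMatching (G : SimpleGraph V) (M : Finset (Sym2 V)) : Prop :=
  IsMatching G M ∧ ∀ N, IsMatching G N → M ⊆ N → N = M

/-- `min-m(G)`: the minimum size of a maximal matching. -/
noncomputable def minMaximalMatchingNum (G : SimpleGraph V) : ℕ :=
  sInf {k : ℕ | ∃ M, IsMaximalMatching G M ∧ M.card = k}

/-- Independent (stable) sets of a graph. -/
def IsIndepSet (G : SimpleGraph V) (A : Finset V) : Prop :=
  ∀ x ∈ A, ∀ y ∈ A, ¬ G.Adj x y

/-- A vertex cover. -/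
def IsVertexCover (G : SimpleGraph V) (C : Finset V) : Prop :=
  ∀ x y, G.Adj x y → x ∈ C ∨ y ∈ C

/-- `α(G[F])`: the maximum size of an independent set of `G` contained in `F`. -/
noncomputable def indepNumOn (G : SimpleGraph V) (F : Finset V) : ℕ :=
  sSup {k : ℕ | ∃ A ⊆ F, IsIndepSet G A ∧ A.card = k}

/-- The circuit cover number of a graph: `ccn(G) = min{α(G[F]) : F a vertex cover}`. -/
noncomputable def ccnG (G : SimpleGraph V) : ℕ :=
  sInf {k : ℕ | ∃ F, IsVertexCover G F ∧ k = indepNumOn G F}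

open Classical in
/-- The closed neighborhood of a vertex, as a `Finset`. -/
noncomputable def closedNbhd (G : SimpleGraph V) (x : V) : Finset V :=
  Finset.univ.filter fun z => z = x ∨ G.Adj x z

/-- The maximum privacy degree `Γ(G) = max{|N[x] \ N[y]| : xy ∈ E(G)}`. -/
noncomputable def privacyDeg (G : SimpleGraph V) : ℕ :=
  sSup {k : ℕ | ∃ x y, G.Adj x y ∧ k = (closedNbhd G x \ closedNbhd G y).card}

open Classical in
/-- The maximum degree `Δ(G)`. -/
noncomputable def maxDeg (G : SimpleGraph V) : ℕ :=
  sSup {k : ℕ | ∃ v, k = (Finset.univ.filter fun z => G.Adj v z).card}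

end Graphs

open Classical in
/-- `V(M)`: the set of vertices incident to the edges of `M`. -/
noncomputable def matchVerts {V : Type*} [Fintype V] (M : Finset (Sym2 V)) : Finset V :=
  Finset.univ.filter fun x => ∃ e ∈ M, x ∈ e

variable {X : Finset (Finset α)}

/-!
Induct along the recursion defining `θ`. Fix a non-cone vertex `v`. Every facet `B` of
`del(X;v)` lies in a facet `A ⊆ B ∪ {v}` of `X`, so a witness for `k(del(X;v))` is one for
`k(X)`. Every facet `B` of `lk(X;v)` gives the facet `B ∪ {v}` of `X`; since `v` is not a cone
vertex some facet `A₀` of `X` misses `v`, and prepending `x₀ = v`, `A₀` turns a witness for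
`k(lk(X;v))` into a longer one for `k(X)`. Hence `k(del(X;v)) ≤ k(X)` and
`k(lk(X;v)) + 1 ≤ k(X)`.
-/

/-- `kNum X = sSup (kSet X)` holds by `rfl`. -/
def kSet (X : Finset (Finset α)) : Set ℕ :=
  {k : ℕ | ∃ (x : Fin k → α) (A : Fin (k + 1) → Finset α),
    Function.Injective x ∧ (∀ i, {x i} ∈ X) ∧ (∀ j, IsFacet X (A j)) ∧
    (∀ i : Fin k, x i ∉ A i.castSucc) ∧
    (∀ (i : Fin k) (j : Fin (k + 1)), (i : ℕ) < (j : ℕ) → x i ∈ A j)}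

lemma theta_eq_zero_of_nonConeF_eq_empty (h : nonConeF X = ∅) : theta X = 0 := by
  rw [theta, dif_neg (by simp [h])]

lemma theta_le_max {v : α} (hv : v ∈ nonConeF X) :
    theta X ≤ max (theta (delF X v)) (theta (lkF X v) + 1) := by
  rw [theta, dif_pos ⟨v, hv⟩]
  exact Finset.inf'_le _ (Finset.mem_attach _ ⟨v, hv⟩)

lemma IsComplex.delF (hX : IsComplex X) (v : α) : IsComplex (delF X v) := by
  simp only [IsComplex, ThetaPaper.delF, Finset.mem_filter]
  exact fun A hA B hBA => ⟨hX A hA.1 B hBA, fun hv => hA.2 (hBA hv)⟩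

lemma IsComplex.lkF (hX : IsComplex X) (v : α) : IsComplex (lkF X v) := by
  simp only [IsComplex, ThetaPaper.lkF, Finset.mem_filter]
  exact fun A hA B hBA => ⟨hX A hA.1 B hBA, fun hv => hA.2.1 (hBA hv),
    hX _ hA.2.2 _ (Finset.insert_subset_insert _ hBA)⟩

lemma IsComplex.singleton_mem (hX : IsComplex X) {v : α} (hv : v ∈ vertF X) : {v} ∈ X := by
  obtain ⟨A, hA, hvA⟩ := Finset.mem_biUnion.mp hv
  exact hX A hA {v} (Finset.singleton_subset_iff.mpr hvA)

lemma exists_isFacet_superset {A : Finset α} (hA : A ∈ X) : ∃ B, IsFacet X B ∧ A ⊆ B := by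
  obtain ⟨B, hB, hBmax⟩ := Finset.exists_max_image (X.filter (A ⊆ ·)) Finset.card
    ⟨A, Finset.mem_filter.mpr ⟨hA, subset_rfl⟩⟩
  rw [Finset.mem_filter] at hB
  refine ⟨B, ⟨hB.1, fun C hC hBC => ?_⟩, hB.2⟩
  exact (Finset.eq_of_subset_of_card_le hBC
    (hBmax C (Finset.mem_filter.mpr ⟨hC, hB.2.trans hBC⟩))).symm

lemma exists_isFacet_not_mem (hX : IsComplex X) {v : α} (hv : v ∈ nonConeF X) :
    ∃ A, IsFacet X A ∧ v ∉ A := by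
  by_contra! hcon
  refine (Finset.mem_filter.mp hv).2 (Finset.ext fun S => ?_)
  simp only [delF, lkF, Finset.mem_filter]
  refine ⟨fun ⟨hS, hvS⟩ => ⟨hS, hvS, ?_⟩, fun h => ⟨h.1, h.2.1⟩⟩
  obtain ⟨B, hB, hSB⟩ := exists_isFacet_superset hS
  exact hX B hB.1 _ (Finset.insert_subset (hcon B hB) hSB)

lemma IsFacet.insert_of_lkF (hX : IsComplex X) {v : α} {B : Finset α}
    (hB : IsFacet (lkF X v) B) : IsFacet X (insert v B) := by
  obtain ⟨hBmem, hBmax⟩ := hB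
  obtain ⟨-, hvB, hins⟩ := Finset.mem_filter.mp hBmem
  refine ⟨hins, fun C hC hsub => ?_⟩
  have hvC : v ∈ C := hsub (Finset.mem_insert_self _ _)
  have hCv : C.erase v ∈ lkF X v := Finset.mem_filter.mpr
    ⟨hX C hC _ (Finset.erase_subset _ _), Finset.notMem_erase _ _, by rwa [Finset.insert_erase hvC]⟩
  rw [← hBmax _ hCv (Finset.subset_erase.mpr ⟨(Finset.insert_subset_iff.mp hsub).2, hvB⟩),
    Finset.insert_erase hvC]

lemma IsFacet.exists_isFacet_subset_insert_of_delF (hX : IsComplex X) {v : α} {B : Finset α}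
    (hB : IsFacet (delF X v) B) : ∃ A, IsFacet X A ∧ B ⊆ A ∧ A ⊆ insert v B := by
  obtain ⟨hBmem, hBmax⟩ := hB
  obtain ⟨hBX, hvB⟩ := Finset.mem_filter.mp hBmem
  obtain ⟨A, hA, hBA⟩ := exists_isFacet_superset hBX
  have hAv : A.erase v ∈ delF X v :=
    Finset.mem_filter.mpr ⟨hX A hA.1 _ (Finset.erase_subset _ _), Finset.notMem_erase _ _⟩
  have hB_eq := hBmax _ hAv (Finset.subset_erase.mpr ⟨hBA, hvB⟩)
  exact ⟨A, hA, hBA, hB_eq ▸ Finset.insert_erase_subset v A⟩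

lemma kSet_bddAbove (X : Finset (Finset α)) : BddAbove (kSet X) := by
  refine ⟨(vertF X).card, ?_⟩
  rintro k ⟨x, A, hinj, hx, -⟩
  have hx' : ∀ i, x i ∈ vertF X := fun i => Finset.mem_biUnion.mpr ⟨{x i}, hx i, by simp⟩
  simpa using Finset.card_le_card_of_injOn (s := Finset.univ) x (fun i _ => hx' i) hinj.injOn

lemma zero_mem_kSet (hX : X.Nonempty) : 0 ∈ kSet X := by
  obtain ⟨B, hB, -⟩ := exists_isFacet_superset hX.choose_spec
  exact ⟨Fin.elim0, fun _ => B, Function.injective_of_subsingleton _, fun i => i.elim0,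
    fun _ => hB, fun i => i.elim0, fun i => i.elim0⟩

lemma kNum_mem_kSet (hX : X.Nonempty) : kNum X ∈ kSet X :=
  Nat.sSup_mem ⟨0, zero_mem_kSet hX⟩ (kSet_bddAbove X)

lemma kSet_delF_subset (hX : IsComplex X) (v : α) : kSet (delF X v) ⊆ kSet X := by
  rintro k ⟨x, B, hinj, hx, hB, hxB, hBx⟩
  choose A hA hBA hAB using fun j => (hB j).exists_isFacet_subset_insert_of_delF hX
  have hxv : ∀ i, x i ≠ v := fun i h => (Finset.mem_filter.mp (hx i)).2 (by simp [h])
  refine ⟨x, A, hinj, fun i => (Finset.mem_filter.mp (hx i)).1, hA,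
    fun i h => ?_, fun i j hij => hBA j (hBx i j hij)⟩
  rcases Finset.mem_insert.mp (hAB _ h) with h | h
  exacts [hxv i h, hxB i h]

lemma succ_mem_kSet_of_mem_kSet_lkF (hX : IsComplex X) {v : α} (hv : v ∈ nonConeF X) {k : ℕ}
    (hk : k ∈ kSet (lkF X v)) : k + 1 ∈ kSet X := by
  obtain ⟨x, B, hinj, hx, hB, hxB, hBx⟩ := hk
  obtain ⟨A₀, hA₀, hvA₀⟩ := exists_isFacet_not_mem hX hv
  have hxv : ∀ i, x i ≠ v := fun i h => (Finset.mem_filter.mp (hx i)).2.1 (by simp [h])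
  refine ⟨Fin.cons v x, Fin.cons A₀ fun j => insert v (B j), ?_, ?_, ?_, ?_, ?_⟩
  · exact Fin.cons_injective_iff.mpr ⟨by simpa [eq_comm] using hxv, hinj⟩
  · simpa [Fin.forall_fin_succ, hX.singleton_mem (Finset.mem_filter.mp hv).1] using
      fun i => (Finset.mem_filter.mp (hx i)).1
  · simpa [Fin.forall_fin_succ, hA₀] using fun j => (hB j).insert_of_lkF hX
  · simpa [Fin.forall_fin_succ, ← Fin.succ_castSucc, hvA₀] using fun i => ⟨hxv i, hxB i⟩
  · simpa [Fin.forall_fin_succ] using fun i j hij => Or.inr (hBx i j hij)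

lemma kNum_delF_le (hX : IsComplex X) (v : α) : kNum (delF X v) ≤ kNum X :=
  csSup_le_csSup' (kSet_bddAbove X) (kSet_delF_subset hX v)

lemma kNum_lkF_add_one_le (hX : IsComplex X) {v : α} (hv : v ∈ nonConeF X) :
    kNum (lkF X v) + 1 ≤ kNum X := by
  have hv₁ : {v} ∈ X := hX.singleton_mem (Finset.mem_filter.mp hv).1
  have hlk : (lkF X v).Nonempty :=
    ⟨∅, Finset.mem_filter.mpr ⟨hX _ hv₁ _ (Finset.empty_subset _), Finset.notMem_empty v, hv₁⟩⟩
  exact le_csSup (kSet_bddAbove X)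
    (succ_mem_kSet_of_mem_kSet_lkF hX hv (kNum_mem_kSet hlk))

theorem theta_le_kNum (hX : IsComplex X) : theta X ≤ kNum X := by
  induction hn : X.card using Nat.strong_induction_on generalizing X with
  | _ n ih =>
    subst hn
    rcases (nonConeF X).eq_empty_or_nonempty with h | ⟨v, hv⟩
    · exact (theta_eq_zero_of_nonConeF_eq_empty h).trans_le (Nat.zero_le _)
    have hdel := ih _ (delF_card_lt hv) (hX.delF v) rfl
    have hlk := ih _ (lkF_card_lt hv) (hX.lkF v) rfl
    calc theta X ≤ max (theta (delF X v)) (theta (lkF X v) + 1) := theta_le_max hv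
      _ ≤ kNum X := max_le (hdel.trans (kNum_delF_le hX v))
          ((Nat.add_le_add_right hlk 1).trans (kNum_lkF_add_one_le hX hv))

end ThetaPaper
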